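/- arXiv:1703.09650 — 2 statements merged into one kernel-verified Lean document; each statement's English description precedes it below -/
import Mathlib

section
/- Let s,t > 0 with s+t > 1, s ≠ 1, t ≠ 1. Among the four numbers q1 = s/(s+t), q2 = s/(t^2+st+s-t), q3 = 1/(s+t), q4 = 1/2, no three are equal. -/
/-!
Any three of the four numbers include either the pair `q1, q3` or the pair `q2, q4`.
Now `q1 = q3` forces `s = 1`, and `q2 = 1/2` forces `t = 1` because
`t^2 + st + s - t - 2s = (t - 1)(s + t)`.
-/

theorem eq_two_mul_of_div_eq_half {K : Type*} [Field K] [NeZero (2 : K)] {a b : K}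
    (h : a / b = 1 / 2) : b = 2 * a := by
  have hb : b ≠ 0 := by
    rintro rfl
    simp only [div_zero, one_div] at h
    exact inv_ne_zero two_ne_zero h.symm
  field_simp at h
  linear_combination -h

theorem stmt_15_general (s t : ℝ) (hst : 1 < s + t)
    (hs1 : s ≠ 1) (ht1 : t ≠ 1) :
    let q1 : ℝ := s / (s + t)
    let q2 : ℝ := s / (t ^ 2 + s * t + s - t)
    let q3 : ℝ := 1 / (s + t)
    let q4 : ℝ := 1 / 2
    ¬(q1 = q2 ∧ q2 = q3) ∧ ¬(q1 = q2 ∧ q2 = q4) ∧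
      ¬(q1 = q3 ∧ q3 = q4) ∧ ¬(q2 = q3 ∧ q3 = q4) := by
  intro q1 q2 q3 q4
  have hD : s + t ≠ 0 := by linarith
  have h13 : q1 ≠ q3 := fun h => hs1 ((div_left_inj' hD).mp h)
  have h24 : q2 ≠ q4 := by
    intro h
    have hE := eq_two_mul_of_div_eq_half h
    have : (t - 1) * (s + t) = 0 := by linear_combination hE
    exact ht1 (sub_eq_zero.mp ((mul_eq_zero.mp this).resolve_right hD))
  exact ⟨fun h => h13 (h.1.trans h.2), fun h => h24 h.2,
    fun h => h13 h.1, fun h => h24 (h.1.trans h.2)⟩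

/-- among q1 = s/(s+t), q2 = s/(t^2+st+s-t), q3 = 1/(s+t), q4 = 1/2,
no three are equal. -/
theorem stmt_15 (s t : ℝ) (hs : 0 < s) (ht : 0 < t) (hst : 1 < s + t)
    (hs1 : s ≠ 1) (ht1 : t ≠ 1) :
    let q1 : ℝ := s / (s + t)
    let q2 : ℝ := s / (t ^ 2 + s * t + s - t)
    let q3 : ℝ := 1 / (s + t)
    let q4 : ℝ := 1 / 2
    ¬(q1 = q2 ∧ q2 = q3) ∧ ¬(q1 = q2 ∧ q2 = q4) ∧
      ¬(q1 = q3 ∧ q3 = q4) ∧ ¬(q2 = q3 ∧ q3 = q4) :=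
  stmt_15_general s t hst hs1 ht1
end

section
/- Let s > 0 and q ∈ (0,1). For the ellipse E_q inscribed in the trapezoid Q_{s,1}, with semi-axes of lengths a and b, one has a^2 b^2 = (s/4) q(1-q). Consequently q = 1/2 is the unique maximizer of the area of E_q over q ∈ (0,1). -/
/-- For the ellipse E_q inscribed in the trapezoid Q_{s,1}, with
conic coefficients (by Proposition 1 with t=1)
A = 1, B = 2q(s+1) - 2s, C = ((1-q)s+q)^2, D = -2q, E = -2q((1-q)s+q), F = q^2,
and semi-axes a, b satisfying a²b² = 4δ²/Δ³ where Δ = 4AC - B² and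
δ = CD² + AE² - BDE - FΔ, one has a²b² = (s/4)q(1-q); consequently q = 1/2
uniquely maximizes the area of E_q over q ∈ (0,1). -/
theorem stmt_17 (s : ℝ) (hs : 0 < s) (q : ℝ) (hq : q ∈ Set.Ioo (0 : ℝ) 1)
    (a b : ℝ)
    (hab :
      let A : ℝ := 1
      let B : ℝ := 2 * q * (s + 1) - 2 * s
      let C : ℝ := ((1 - q) * s + q) ^ 2
      let D : ℝ := -2 * q
      let E : ℝ := -2 * q * ((1 - q) * s + q)
      let F : ℝ := q ^ 2
      let Δ : ℝ := 4 * A * C - B ^ 2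
      let δ : ℝ := C * D ^ 2 + A * E ^ 2 - B * D * E - F * Δ
      a ^ 2 * b ^ 2 = 4 * δ ^ 2 / Δ ^ 3) :
    a ^ 2 * b ^ 2 = s / 4 * (q * (1 - q)) ∧
      ∀ q' ∈ Set.Ioo (0 : ℝ) 1, q' ≠ 1 / 2 →
        s / 4 * (q' * (1 - q')) < s / 4 * ((1 / 2 : ℝ) * (1 - 1 / 2)) := by
  obtain ⟨hq0, hq1⟩ := hq
  simp only at hab
  have hΔ : (4 * 1 * ((1 - q) * s + q) ^ 2 - (2 * q * (s + 1) - 2 * s) ^ 2)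
      = 16 * s * q * (1 - q) := by ring
  have hΔpos : (0:ℝ) < 4 * 1 * ((1 - q) * s + q) ^ 2 - (2 * q * (s + 1) - 2 * s) ^ 2 := by
    rw [hΔ]; have h1q : (0:ℝ) < 1 - q := by linarith
    exact mul_pos (by positivity) h1q
  constructor
  · rw [hab, div_eq_iff (by positivity)]
    ring
  · intro q' _ hne
    have h : q' - 1/2 ≠ 0 := sub_ne_zero.mpr hne
    nlinarith [sq_pos_of_ne_zero h, hs]
end
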